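/- In type B_n (n ≥ 3), where the simple roots are α_i = −ω_{i−1} + 2ω_i − ω_{i+1} for 1 ≤ i ≤ n−2, α_{n−1} = −ω_{n−2} + 2ω_{n−1} − 2ω_n, and α_n = −ω_{n−1} + 2ω_n, the level sets satisfy: Λ₁ = {0, ω_n}, Λ₂ = {ω_1, ω_1 + ω_n}, and ω_2 is the unique radical weight lying in Λ₃. -/

import Mathlib

/-!
Write `β = λ - ν = ∑ cᵢ αᵢ` (`cᵢ ≥ 0`) in the orthonormal basis `ε₁, …, εₙ` of type `B_n`, where
`αᵢ = εᵢ - εᵢ₊₁` and `αₙ = εₙ`: its coordinates are `bₖ = cₖ - cₖ₋₁`, so `b₁ = c₁ ≥ 0` and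
`b₁ + ⋯ + bₙ = cₙ ≥ 0`, while the coordinates of `β` in the fundamental weights are `bₖ - bₖ₊₁`
and `2bₙ`. When `ν` is dominant these are bounded by the coordinates of `λ`. For `λ ≤ ω_n`,
`λ ≤ ω₁ + ω_n` and `λ = ω₂` this makes `b` nondecreasing from the index `1`, `2`, resp. `3` on and
`bₙ ≤ 0`, so `cₙ ≥ 0` forces that tail to vanish, leaving `β = 0`, `β = ε₁`, resp.
`β ∈ {ε₂, ε₁ + ε₂}`. In the other direction, subtracting a short root `εₚ = ω_p - ω_{p-1}` or a
simple root `α₁`, `αₙ` from a weight with a large coordinate gives a dominant weight strictly below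
it, and requiring that weight to have lower level bounds every coordinate. Both directions together
show `Λ₁ = [0, ω_n]` and `Λ₁ ∪ Λ₂ = [0, ω₁ + ω_n]` as boxes in `ℤⁿ`. In `Λ₃`, radical weights have
even `ω_n`-coordinate, which leaves only `ω₂`.
-/

namespace WeightLevelsBn

/-- The simple roots of `B_n` written in the basis of fundamental dominant weights:
`α_i = -ω_{i-1} + 2ω_i - ω_{i+1}` for `i ≤ n-2`, `α_{n-1} = -ω_{n-2} + 2ω_{n-1} - 2ω_n`,
and `α_n = -ω_{n-1} + 2ω_n`, with `0`-based indexing. -/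
def alpha (n : ℕ) (i : Fin n) : Fin n → ℤ := fun j =>
  if j = i then 2
  else if (i : ℕ) = n - 2 then
    (if (j : ℕ) + 1 = (i : ℕ) then -1 else if (j : ℕ) = n - 1 then -2 else 0)
  else if (j : ℕ) + 1 = (i : ℕ) ∨ (i : ℕ) + 1 = (j : ℕ) then -1
  else 0

/-- A weight is dominant if all its coordinates (in the fundamental weight basis) are `≥ 0`. -/
def dominant (n : ℕ) (l : Fin n → ℤ) : Prop := ∀ i, 0 ≤ l i

/-- `prec n μ λ` means `μ ≺ λ`: `μ ≠ λ` and `λ - μ` is an `ℕ`-linear combination of the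
simple roots. -/
def prec (n : ℕ) (μ l : Fin n → ℤ) : Prop :=
  μ ≠ l ∧ ∃ c : Fin n → ℕ, l = μ + ∑ i, (c i : ℤ) • alpha n i

/-- A weight is radical if it is a `ℤ`-linear combination of the simple roots. -/
def radical (n : ℕ) (l : Fin n → ℤ) : Prop :=
  ∃ c : Fin n → ℤ, l = ∑ i, c i • alpha n i

/-- `cum n i` is the union `Λ₁ ∪ ⋯ ∪ Λ_i` of the first `i` level sets. -/
def cum (n : ℕ) : ℕ → Set (Fin n → ℤ)
  | 0 => ∅
  | i + 1 => cum n i ∪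
      {l | dominant n l ∧ l ∉ cum n i ∧ ∀ ν, dominant n ν → prec n ν l → ν ∈ cum n i}

/-- `level n i` is the set `Λ_i` of weights of level `i` (for `i ≥ 1`). -/
def level (n : ℕ) (i : ℕ) : Set (Fin n → ℤ) :=
  {l | dominant n l ∧ l ∉ cum n (i - 1) ∧ ∀ ν, dominant n ν → prec n ν l → ν ∈ cum n (i - 1)}


theorem Icc_add_single_one_eq_union {ι : Type*} [DecidableEq ι] {a b : ι → ℤ} (i : ι)
    (hab : a i = b i) :
    Set.Icc a (b + Pi.single i 1) =
      Set.Icc a b ∪ Set.Icc (a + Pi.single i 1) (b + Pi.single i 1) := by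
  ext μ
  simp only [Set.mem_union, Set.mem_Icc]
  constructor
  · rintro ⟨ha, hb⟩
    by_cases hi : μ i ≤ a i
    · refine Or.inl ⟨ha, fun j => ?_⟩
      by_cases hj : j = i
      · subst hj
        exact hi.trans hab.le
      · simpa [hj] using hb j
    · refine Or.inr ⟨fun j => ?_, hb⟩
      by_cases hj : j = i
      · subst hj
        simp only [Pi.add_apply, Pi.single_eq_same]
        omega
      · simpa [hj] using ha j
  · have h : (0 : ι → ℤ) ≤ Pi.single i 1 := Pi.single_nonneg.2 zero_le_one
    rintro (⟨ha, hb⟩ | ⟨ha, hb⟩)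
    · exact ⟨ha, hb.trans (le_add_of_nonneg_right h)⟩
    · exact ⟨(le_add_of_nonneg_right h).trans ha, hb⟩

theorem Icc_self_add_single_one {ι : Type*} [DecidableEq ι] (a : ι → ℤ) (i : ι) :
    Set.Icc a (a + Pi.single i 1) = {a, a + Pi.single i 1} := by
  rw [Icc_add_single_one_eq_union i rfl, Set.Icc_self, Set.Icc_self, Set.singleton_union]

theorem eq_zero_of_sum_nonneg_of_monotone_tail {b : ℕ → ℤ} {m n : ℕ} (hmn : m < n)
    (hsum : 0 ≤ ∑ k ∈ Finset.range n, b k) (hhead : ∀ j < m, b j ≤ b m + 1)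
    (hmono : ∀ j, m ≤ j → j + 1 < n → b j ≤ b (j + 1)) (hlast : b (n - 1) ≤ 0) :
    ∀ j, m ≤ j → j < n → b j = 0 := by
  have hmonoOn : MonotoneOn b (Set.Ico m n) :=
    monotoneOn_of_le_succ Set.ordConnected_Ico fun j _ hj hj' => by
      simp only [Order.succ_eq_add_one, Set.mem_Ico] at hj hj'
      exact hmono j hj.1 hj'.2
  have htail : ∀ j, m ≤ j → j < n → b m ≤ b j ∧ b j ≤ 0 := fun j hj hjn =>
    ⟨hmonoOn ⟨le_rfl, hmn⟩ ⟨hj, hjn⟩ hj,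
      (hmonoOn ⟨hj, hjn⟩ ⟨by omega, by omega⟩ (by omega)).trans hlast⟩
  have hm : 0 ≤ b m := by
    by_contra! hneg
    have : ∑ k ∈ Finset.range n, b k < ∑ k ∈ Finset.range n, 0 := by
      refine Finset.sum_lt_sum (fun k hk => ?_) ⟨m, Finset.mem_range.2 hmn, hneg⟩
      rw [Finset.mem_range] at hk
      rcases lt_or_ge k m with hkm | hkm
      · linarith [hhead k hkm]
      · exact (htail k hkm hk).2
    simp only [Finset.sum_const_zero] at this
    omega
  intro j hj hjn
  have := htail j hj hjn
  omega

section RootCoordinates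

variable {n : ℕ}

/- With `α_i = ε_i - ε_{i+1}` and `α_n = ε_n` (`ε` orthonormal), `∑ c_i α_i` has `ε`-coordinates
`c_k - c_{k-1}` (with `c_0 = 0`); `coeffSeq c k = c_{k-1}` makes this `epsCoord c`, indexed from
`0` like `Fin n`. Conversely `ofEps b` pairs the vector with `ε`-coordinates `b` with the simple
coroots, i.e. writes it in the fundamental weights. -/
def coeffSeq (c : Fin n → ℤ) : ℕ → ℤ
  | 0 => 0
  | k + 1 => if h : k < n then c ⟨k, h⟩ else 0

def epsCoord (c : Fin n → ℤ) (k : ℕ) : ℤ := coeffSeq c (k + 1) - coeffSeq c k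

def ofEps (b : ℕ → ℤ) : Fin n → ℤ := fun j =>
  if (j : ℕ) + 1 = n then 2 * b j else b j - b (j + 1)

lemma coeffSeq_nonneg {c : Fin n → ℤ} (hc : 0 ≤ c) (k : ℕ) : 0 ≤ coeffSeq c k := by
  rcases k with _ | k
  · exact le_rfl
  · simp only [coeffSeq]
    split_ifs
    exacts [hc _, le_rfl]

lemma sum_range_epsCoord (c : Fin n → ℤ) (m : ℕ) :
    ∑ k ∈ Finset.range m, epsCoord c k = coeffSeq c m :=
  (Finset.sum_range_sub (coeffSeq c) m).trans (sub_zero _)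

lemma sum_mul_ite_eq_coeffSeq (c : Fin n → ℤ) (w : ℤ) (k : ℕ) :
    ∑ i : Fin n, c i * (w * if (i : ℕ) + 1 = k then 1 else 0) = w * coeffSeq c k := by
  simp only [mul_ite, mul_one, mul_zero]
  rcases k with _ | k
  · simp [coeffSeq]
  by_cases hk : k < n
  · rw [Finset.sum_eq_single ⟨k, hk⟩ (by intro i _ hi; simp_all [Fin.ext_iff]) (by simp)]
    simp [coeffSeq, hk, mul_comm]
  · rw [Finset.sum_eq_zero (by intro i _; have := i.isLt; rw [if_neg (by omega)])]
    simp [coeffSeq, hk]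

lemma alpha_apply (i j : Fin n) :
    alpha n i j = 2 * (if (i : ℕ) + 1 = (j : ℕ) + 1 then 1 else 0)
      - (if (j : ℕ) + 1 = n then 2 else 1) * (if (i : ℕ) + 1 = j then 1 else 0)
      - (if (j : ℕ) + 1 = n then 0 else 1) * (if (i : ℕ) + 1 = (j : ℕ) + 2 then 1 else 0) := by
  obtain ⟨i, hi⟩ := i
  obtain ⟨j, hj⟩ := j
  simp only [alpha, Fin.mk.injEq]
  split_ifs <;> omega

lemma sum_smul_alpha_eq_ofEps (c : Fin n → ℤ) :
    ∑ i, c i • alpha n i = ofEps (epsCoord c) := by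
  funext j
  simp only [Finset.sum_apply, Pi.smul_apply, smul_eq_mul, alpha_apply, mul_sub,
    Finset.sum_sub_distrib, sum_mul_ite_eq_coeffSeq, ofEps, epsCoord]
  split_ifs <;> ring

lemma ofEps_congr {b b' : ℕ → ℤ} (h : ∀ k < n, b k = b' k) : ofEps (n := n) b = ofEps b' := by
  funext j
  by_cases hj : (j : ℕ) + 1 = n
  · simp [ofEps, hj, h j j.isLt]
  · simp [ofEps, hj, h j j.isLt, h (j + 1) (by omega)]

lemma ofEps_zero : ofEps (n := n) 0 = 0 := by
  funext j
  simp [ofEps]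

lemma sub_succ_le_of_ofEps_le {b : ℕ → ℤ} {u : Fin n → ℤ} (h : ofEps b ≤ u) {k : ℕ}
    (hk : k + 1 < n) : b k - b (k + 1) ≤ u ⟨k, by omega⟩ := by
  simpa [ofEps, hk.ne] using h ⟨k, by omega⟩

lemma two_mul_le_of_ofEps_le {b : ℕ → ℤ} {u : Fin n → ℤ} (h : ofEps b ≤ u) (hn : 0 < n) :
    2 * b (n - 1) ≤ u ⟨n - 1, by omega⟩ := by
  simpa [ofEps, Nat.sub_add_cancel hn] using h ⟨n - 1, by omega⟩

end RootCoordinates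

section Weights

variable {n : ℕ}

lemma single_one_apply (a j : Fin n) :
    (Pi.single a 1 : Fin n → ℤ) j = if (j : ℕ) = a then 1 else 0 := by
  simp [Pi.single_apply, Fin.ext_iff]

lemma exists_ofEps_of_prec {ν l : Fin n → ℤ} (hν : dominant n ν) (h : prec n ν l) :
    ∃ b : ℕ → ℤ, ν = l - ofEps b ∧ ofEps (n := n) b ≠ 0 ∧ ofEps b ≤ l ∧ 0 ≤ b 0 ∧
      0 ≤ ∑ k ∈ Finset.range n, b k := by
  obtain ⟨hne, c, rfl⟩ := h
  have hc : (0 : Fin n → ℤ) ≤ fun i => (c i : ℤ) := fun i => Int.natCast_nonneg _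
  rw [sum_smul_alpha_eq_ofEps] at hne ⊢
  refine ⟨epsCoord _, by abel, fun h => hne (by simp [h]), fun j => by simpa using hν j, ?_, ?_⟩
  · simpa [epsCoord, coeffSeq] using coeffSeq_nonneg hc 1
  · rw [sum_range_epsCoord]
    exact coeffSeq_nonneg hc n

lemma not_prec_of_le_single_last {ν l : Fin n → ℤ} (hn : 0 < n)
    (hl : l ≤ Pi.single (⟨n - 1, by omega⟩ : Fin n) 1) (hν : dominant n ν) : ¬ prec n ν l := by
  intro h
  obtain ⟨b, -, hne, hle, -, hsum⟩ := exists_ofEps_of_prec hν h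
  have hb := hle.trans hl
  refine hne ((ofEps_congr fun k hk => ?_).trans ofEps_zero)
  refine eq_zero_of_sum_nonneg_of_monotone_tail hn hsum (by simp) (fun j _ hj => ?_) ?_ k
    k.zero_le hk
  · have := sub_succ_le_of_ofEps_le hb hj
    simp only [single_one_apply] at this
    split_ifs at this <;> omega
  · have := two_mul_le_of_ofEps_le hb hn
    simp only [Pi.single_eq_same] at this
    omega

lemma eq_sub_single_zero_of_prec {ν l : Fin n → ℤ} (hn : 2 ≤ n)
    (hl : l ≤ Pi.single (⟨0, by omega⟩ : Fin n) 1 + Pi.single ⟨n - 1, by omega⟩ 1)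
    (hν : dominant n ν) (h : prec n ν l) : ν = l - Pi.single ⟨0, by omega⟩ 1 := by
  obtain ⟨b, rfl, hne, hle, h0, hsum⟩ := exists_ofEps_of_prec hν h
  have hb := hle.trans hl
  have hb01 := sub_succ_le_of_ofEps_le hb (k := 0) (by omega)
  simp only [↓reduceIte, zero_add, Pi.add_apply, single_one_apply] at hb01
  have htail := eq_zero_of_sum_nonneg_of_monotone_tail (m := 1) (by omega) hsum
    (fun j hj => by obtain rfl := Nat.lt_one_iff.mp hj; split_ifs at hb01 <;> omega)
    (fun j hj hjn => by
      have := sub_succ_le_of_ofEps_le hb hjn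
      simp only [Pi.add_apply, single_one_apply] at this
      split_ifs at this <;> omega)
    (by
      have := two_mul_le_of_ofEps_le hb (by omega)
      simp only [↓reduceIte, Pi.add_apply, single_one_apply] at this
      split_ifs at this <;> omega)
  have hb1 := htail 1 le_rfl (by omega)
  have hb0 : b 0 = 1 := by
    by_contra hb0
    refine hne ((ofEps_congr fun k hk => ?_).trans ofEps_zero)
    rcases k with _ | k
    · split_ifs at hb01 <;> simp only [Pi.zero_apply] <;> omega
    · exact htail _ (by omega) hk
  rw [ofEps_congr (b' := Pi.single 0 1) fun k hk => by
    rcases k with _ | k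
    · simpa using hb0
    · simpa using htail _ (by omega) hk]
  funext j
  simp only [↓reduceIte, Pi.sub_apply, ofEps, Pi.single_apply, Fin.ext_iff, Nat.add_one_ne_zero]
  split_ifs <;> omega

lemma eq_single_zero_or_eq_zero_of_prec {ν : Fin n → ℤ} (hn : 2 < n) (hν : dominant n ν)
    (h : prec n ν (Pi.single ⟨1, by omega⟩ 1)) : ν = Pi.single ⟨0, by omega⟩ 1 ∨ ν = 0 := by
  obtain ⟨b, rfl, hne, hle, h0, hsum⟩ := exists_ofEps_of_prec hν h
  have hb01 := sub_succ_le_of_ofEps_le hle (k := 0) (by omega)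
  have hb12 := sub_succ_le_of_ofEps_le hle (k := 1) (by omega)
  simp only [↓reduceIte, Nat.reduceAdd, single_one_apply, zero_ne_one] at hb01 hb12
  have htail := eq_zero_of_sum_nonneg_of_monotone_tail (m := 2) (by omega) hsum
    (fun j hj => by interval_cases j <;> omega)
    (fun j hj hjn => by
      have := sub_succ_le_of_ofEps_le hle hjn
      simp only [single_one_apply] at this
      split_ifs at this <;> omega)
    (by
      have := two_mul_le_of_ofEps_le hle (by omega)
      simp only [single_one_apply] at this
      split_ifs at this <;> omega)
  have hb2 := htail 2 le_rfl (by omega)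
  have hb1 : b 1 = 1 := by
    by_contra hb1
    refine hne ((ofEps_congr fun k hk => ?_).trans ofEps_zero)
    rcases k with _ | _ | k
    · simp only [Pi.zero_apply]
      omega
    · simp only [zero_add, Pi.zero_apply]
      omega
    · exact htail _ (by omega) hk
  rw [ofEps_congr (b' := fun k => if k = 0 then b 0 else if k = 1 then 1 else 0) fun k hk => by
    rcases k with _ | _ | k <;> simp [hb1, htail _ _ hk]]
  rcases (by omega : b 0 = 0 ∨ b 0 = 1) with hb0 | hb0
  · left
    funext j
    simp only [↓reduceIte, Pi.sub_apply, ofEps, single_one_apply, Nat.add_one_ne_zero]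
    split_ifs <;> omega
  · right
    funext j
    simp only [↓reduceIte, Pi.sub_apply, Pi.zero_apply, ofEps, single_one_apply,
      Nat.add_one_ne_zero]
    split_ifs <;> omega

lemma prec_sub_of_sum_eq {l d : Fin n → ℤ} (c : Fin n → ℕ)
    (hd : ∑ i, (c i : ℤ) • alpha n i = d) (hne : d ≠ 0) : prec n (l - d) l :=
  ⟨fun h => hne (sub_eq_self.mp h), c, by rw [hd, sub_add_cancel]⟩

lemma prec_sub_alpha (l : Fin n → ℤ) (i : Fin n) : prec n (l - alpha n i) l := by
  refine prec_sub_of_sum_eq (Pi.single i 1) (by simp [Pi.single_apply]) fun h => ?_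
  have := congrFun h i
  simp [alpha] at this

/- `ofEps (Pi.single p 1)` is the short root `ε_{p+1} = α_{p+1} + ⋯ + α_n`, which is
`ω_{p+1} - ω_p` for `p + 1 < n`. -/
lemma prec_sub_ofEps_single (l : Fin n → ℤ) {p : ℕ} (hp : p < n) :
    prec n (l - ofEps (Pi.single p 1)) l := by
  refine prec_sub_of_sum_eq (fun i => if p ≤ (i : ℕ) then 1 else 0) ?_ fun h => ?_
  · rw [sum_smul_alpha_eq_ofEps]
    refine ofEps_congr fun k hk => ?_
    rcases k with _ | k <;>
      simp only [epsCoord, coeffSeq, Pi.single_apply, Nat.cast_ite, Nat.cast_one, Nat.cast_zero] <;>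
      split_ifs <;> omega
  · have := congrFun h ⟨p, hp⟩
    simp only [↓reduceIte, ofEps, Pi.single_apply, Pi.zero_apply] at this
    split_ifs at this <;> omega

lemma dominant_single (i : Fin n) : dominant n (Pi.single i 1) := fun j => by
  by_cases h : j = i <;> simp [h]

lemma dominant_sub_of_le {l d : Fin n → ℤ} (i : Fin n) (hl : dominant n l)
    (hd : ∀ j ≠ i, d j ≤ 0) (hi : d i ≤ l i) : dominant n (l - d) := by
  intro j
  by_cases hj : j = i
  · subst hj
    simpa using hi
  · simpa using (hd j hj).trans (hl j)

lemma dominant_sub_alpha {l : Fin n → ℤ} (hl : dominant n l) {i : Fin n} (hi : 2 ≤ l i) :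
    dominant n (l - alpha n i) :=
  dominant_sub_of_le i hl (fun j hj => by simp only [↓reduceIte, alpha, hj]; split_ifs <;> omega)
    (by simpa [alpha] using hi)

lemma dominant_sub_ofEps_single {l : Fin n → ℤ} (hl : dominant n l) {p : ℕ} (hp : p + 1 < n)
    (hlp : 1 ≤ l ⟨p, by omega⟩) : dominant n (l - ofEps (Pi.single p 1)) :=
  dominant_sub_of_le ⟨p, by omega⟩ hl
    (fun j hj => by
      simp only [ne_eq, Fin.ext_iff] at hj
      simp only [ofEps, Pi.single_apply]
      split_ifs <;> omega)
    (by simpa [ofEps, hp.ne] using hlp)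

lemma radical.even_apply_last {l : Fin n → ℤ} (hl : radical n l) (hn : 0 < n) :
    Even (l ⟨n - 1, by omega⟩) := by
  obtain ⟨c, rfl⟩ := hl
  rw [sum_smul_alpha_eq_ofEps]
  simp [ofEps, Nat.sub_add_cancel hn]

lemma radical_single_one (hn : 2 < n) : radical n (Pi.single ⟨1, by omega⟩ 1) := by
  refine ⟨fun i => if (i : ℕ) = 0 then 1 else 2, ?_⟩
  rw [sum_smul_alpha_eq_ofEps, ofEps_congr (b' := fun k => if k ≤ 1 then 1 else 0) fun k hk => by
    rcases k with _ | k <;> simp [epsCoord, coeffSeq] <;> (try split_ifs) <;> omega]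
  funext j
  simp only [ofEps, single_one_apply]
  split_ifs <;> omega

end Weights

section Levels

variable {n : ℕ}

lemma cum_succ (i : ℕ) : cum n (i + 1) = cum n i ∪ level n (i + 1) := rfl

lemma level_one (hn : 0 < n) : level n 1 = Set.Icc 0 (Pi.single ⟨n - 1, by omega⟩ 1) := by
  ext l
  simp only [level, Nat.sub_self, cum, Set.mem_ofPred_eq, Set.mem_empty_iff_false,
    not_false_eq_true, imp_false, true_and, Set.mem_Icc]
  constructor
  · rintro ⟨hl, hmin⟩
    refine ⟨hl, fun ⟨j, hj⟩ => ?_⟩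
    by_contra! hlj
    simp only [single_one_apply] at hlj
    by_cases hjn : j + 1 = n
    · exact hmin _ (dominant_sub_alpha hl (i := ⟨j, hj⟩) (by split_ifs at hlj <;> omega))
        (prec_sub_alpha l _)
    · exact hmin _ (dominant_sub_ofEps_single hl (by omega) (by split_ifs at hlj <;> omega))
        (prec_sub_ofEps_single l hj)
  · rintro ⟨hl, hle⟩
    exact ⟨hl, fun ν hν => not_prec_of_le_single_last hn hle hν⟩

lemma cum_one (hn : 0 < n) : cum n 1 = Set.Icc 0 (Pi.single ⟨n - 1, by omega⟩ 1) := by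
  rw [cum_succ, level_one hn]
  exact Set.empty_union _

lemma Icc_zero_single_zero_add_single_last (hn : 2 ≤ n) :
    Set.Icc (0 : Fin n → ℤ) (Pi.single ⟨0, by omega⟩ 1 + Pi.single ⟨n - 1, by omega⟩ 1) =
      Set.Icc 0 (Pi.single ⟨n - 1, by omega⟩ 1) ∪
        Set.Icc (Pi.single ⟨0, by omega⟩ 1)
          (Pi.single ⟨0, by omega⟩ 1 + Pi.single ⟨n - 1, by omega⟩ 1) := by
  rw [add_comm, Icc_add_single_one_eq_union, zero_add]
  simp only [Pi.zero_apply, single_one_apply]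
  split_ifs <;> omega

lemma le_single_zero_add_single_last_of_forall_prec (hn : 2 ≤ n) {l : Fin n → ℤ}
    (hl : dominant n l)
    (hmin : ∀ ν, dominant n ν → prec n ν l → ν ≤ Pi.single ⟨n - 1, by omega⟩ 1) :
    l ≤ Pi.single ⟨0, by omega⟩ 1 + Pi.single ⟨n - 1, by omega⟩ 1 := by
  intro ⟨j, hj⟩
  by_contra! hlj
  simp only [Pi.add_apply, single_one_apply] at hlj
  rcases (by omega : j = 0 ∨ (1 ≤ j ∧ j + 1 < n) ∨ j + 1 = n) with rfl | ⟨hj1, hjn⟩ | hjn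
  · have h := hmin _ (dominant_sub_ofEps_single hl (p := 0) (by omega)
      (by split_ifs at hlj <;> omega)) (prec_sub_ofEps_single l hj) ⟨0, hj⟩
    simp only [↓reduceIte, Pi.sub_apply, ofEps, Pi.single_apply, Nat.add_one_ne_zero,
      Fin.mk.injEq] at h
    split_ifs at h hlj <;> omega
  · have h := hmin _ (dominant_sub_ofEps_single hl hjn (by split_ifs at hlj <;> omega))
      (prec_sub_ofEps_single l hj) ⟨j - 1, by omega⟩
    have := hl ⟨j - 1, by omega⟩
    simp only [Pi.sub_apply, ofEps, Pi.single_apply, Fin.mk.injEq] at h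
    split_ifs at h <;> omega
  · have h := hmin _ (dominant_sub_alpha hl (i := ⟨j, hj⟩) (by split_ifs at hlj <;> omega))
      (prec_sub_alpha l _) ⟨n - 2, by omega⟩
    have := hl ⟨n - 2, by omega⟩
    simp only [Pi.sub_apply, alpha, Fin.mk.injEq, single_one_apply] at h
    split_ifs at h <;> omega

lemma level_two (hn : 2 ≤ n) :
    level n 2 = Set.Icc (Pi.single ⟨0, by omega⟩ 1)
      (Pi.single ⟨0, by omega⟩ 1 + Pi.single ⟨n - 1, by omega⟩ 1) := by
  ext l
  simp only [level, Nat.add_one_sub_one, cum_one (by omega : 0 < n), Set.mem_ofPred_eq]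
  constructor
  · rintro ⟨hl, hnot, hmin⟩
    have hmem : l ∈ Set.Icc 0 (Pi.single ⟨0, by omega⟩ 1 + Pi.single ⟨n - 1, by omega⟩ 1) :=
      ⟨hl, le_single_zero_add_single_last_of_forall_prec hn hl fun ν hν h => (hmin ν hν h).2⟩
    rw [Icc_zero_single_zero_add_single_last hn] at hmem
    exact hmem.resolve_left hnot
  · intro hl
    refine ⟨fun i => ((Pi.single_nonneg.2 zero_le_one).trans hl.1) i, fun h => ?_,
      fun ν hν h => ⟨hν, ?_⟩⟩
    · have := (hl.1.trans h.2) ⟨0, by omega⟩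
      simp only [↓reduceIte, single_one_apply] at this
      split_ifs at this <;> omega
    · rw [eq_sub_single_zero_of_prec hn hl.2 hν h]
      exact sub_le_iff_le_add'.2 hl.2

lemma cum_two (hn : 2 ≤ n) :
    cum n 2 = Set.Icc 0 (Pi.single ⟨0, by omega⟩ 1 + Pi.single ⟨n - 1, by omega⟩ 1) := by
  rw [cum_succ, cum_one (by omega), level_two hn, Icc_zero_single_zero_add_single_last hn]

lemma apply_eq_zero_of_forall_prec (hn : 2 < n) {l : Fin n → ℤ} (hl : dominant n l)
    (hrad : radical n l) (hmin : ∀ ν, dominant n ν → prec n ν l →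
      ν ≤ Pi.single ⟨0, by omega⟩ 1 + Pi.single ⟨n - 1, by omega⟩ 1)
    (j : ℕ) (hj : j < n) (h2 : 2 ≤ j) : l ⟨j, hj⟩ = 0 := by
  have := hl ⟨j, hj⟩
  by_contra! hne
  by_cases hjn : j + 1 = n
  · obtain rfl : j = n - 1 := by omega
    obtain ⟨m, hm⟩ := hrad.even_apply_last (by omega)
    have h := hmin _ (dominant_sub_alpha hl (i := ⟨n - 1, hj⟩) (by omega))
      (prec_sub_alpha l _) ⟨n - 2, by omega⟩
    have := hl ⟨n - 2, by omega⟩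
    simp only [Pi.sub_apply, Pi.add_apply, alpha, Fin.mk.injEq, single_one_apply] at h
    split_ifs at h <;> omega
  · have h := hmin _ (dominant_sub_ofEps_single hl (by omega) (by omega))
      (prec_sub_ofEps_single l hj) ⟨j - 1, by omega⟩
    have := hl ⟨j - 1, by omega⟩
    simp only [Pi.sub_apply, Pi.add_apply, ofEps, Pi.single_apply, Fin.mk.injEq] at h
    split_ifs at h <;> omega

lemma eq_single_one_of_mem_level_three (hn : 2 < n) {l : Fin n → ℤ} (hl : l ∈ level n 3)
    (hrad : radical n l) : l = Pi.single ⟨1, by omega⟩ 1 := by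
  obtain ⟨hl, hnot, hmin⟩ := hl
  simp only [Nat.add_one_sub_one, cum_two (by omega : 2 ≤ n), Set.mem_Icc] at hnot hmin
  have hmin' := fun ν hν h => (hmin ν hν h).2
  have hzero := apply_eq_zero_of_forall_prec hn hl hrad hmin'
  by_cases h1 : l ⟨1, by omega⟩ = 0
  · have h0 : l ⟨0, by omega⟩ ≤ 1 := by
      by_contra! h0
      have h := hmin' _ (dominant_sub_alpha hl (i := ⟨0, by omega⟩) (by omega))
        (prec_sub_alpha l _) ⟨1, by omega⟩
      simp only [↓reduceIte, Pi.sub_apply, Pi.add_apply, alpha, Fin.mk.injEq, single_one_apply,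
        Nat.add_one_ne_zero, or_true] at h
      split_ifs at h <;> omega
    refine absurd ⟨hl, fun ⟨j, hj⟩ => ?_⟩ hnot
    simp only [Pi.add_apply, single_one_apply]
    rcases (by omega : j = 0 ∨ j = 1 ∨ 2 ≤ j) with rfl | rfl | h2
    · split_ifs <;> omega
    · split_ifs <;> omega
    · rw [hzero j hj h2]
      split_ifs <;> omega
  · have h := hmin' _ (dominant_sub_ofEps_single hl (p := 1) (by omega)
      (by have := hl ⟨1, by omega⟩; omega)) (prec_sub_ofEps_single l (by omega))
    have h0 := h ⟨0, by omega⟩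
    have h11 := h ⟨1, by omega⟩
    have := hl ⟨0, by omega⟩
    have := hl ⟨1, by omega⟩
    simp only [↓reduceIte, Pi.sub_apply, Pi.add_apply, ofEps, Pi.single_apply, Fin.mk.injEq,
      Nat.add_one_ne_zero, zero_add, zero_ne_one, Nat.reduceEqDiff] at h0 h11
    funext ⟨j, hj⟩
    rcases (by omega : j = 0 ∨ j = 1 ∨ 2 ≤ j) with rfl | rfl | h2
    · simp only [single_one_apply, zero_ne_one, ↓reduceIte]
      split_ifs at h0 h11 <;> omega
    · simp only [single_one_apply, ↓reduceIte]
      split_ifs at h0 h11 <;> omega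
    · simp only [hzero j hj h2, single_one_apply]
      split_ifs <;> omega

lemma radical_level_three (hn : 2 < n) :
    {l | l ∈ level n 3 ∧ radical n l} = {Pi.single ⟨1, by omega⟩ 1} := by
  ext l
  refine ⟨fun ⟨hl, hrad⟩ => eq_single_one_of_mem_level_three hn hl hrad, ?_⟩
  rintro rfl
  simp only [level, Nat.add_one_sub_one, cum_two (by omega : 2 ≤ n), Set.mem_Icc]
  refine ⟨⟨dominant_single _, fun h => ?_, fun ν hν h => ⟨hν, ?_⟩⟩, radical_single_one hn⟩
  · have := h.2 ⟨1, by omega⟩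
    simp only [↓reduceIte, Pi.add_apply, single_one_apply, Nat.add_one_ne_zero] at this
    split_ifs at this <;> omega
  · rcases eq_single_zero_or_eq_zero_of_prec hn hν h with rfl | rfl
    · exact le_add_of_nonneg_right (Pi.single_nonneg.2 zero_le_one)
    · exact add_nonneg (Pi.single_nonneg.2 zero_le_one) (Pi.single_nonneg.2 zero_le_one)

end Levels

theorem levels_Bn (n : ℕ) (hn : 3 ≤ n) :
    level n 1 = {0, Pi.single (⟨n - 1, by omega⟩ : Fin n) (1 : ℤ)} ∧
    level n 2 =
      {Pi.single (⟨0, by omega⟩ : Fin n) (1 : ℤ),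
       Pi.single (⟨0, by omega⟩ : Fin n) (1 : ℤ) +
         Pi.single (⟨n - 1, by omega⟩ : Fin n) (1 : ℤ)} ∧
    {l | l ∈ level n 3 ∧ radical n l} = {Pi.single (⟨1, by omega⟩ : Fin n) (1 : ℤ)} := by
  refine ⟨?_, ?_, radical_level_three hn⟩
  · simpa [level_one (by omega : 0 < n)] using
      Icc_self_add_single_one (0 : Fin n → ℤ) ⟨n - 1, by omega⟩
  · rw [level_two (by omega), Icc_self_add_single_one]

end WeightLevelsBn
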